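/- Let Σ ⊂ ℝ³ × ℝ be a set such that for every z = (x,t) ∈ Σ and every δ > 0 there exists 0 < r < δ with r < ε⁻² ∫_{Q_r(z)} F dx dt, where F ∈ L¹(ℝ⁴) is nonnegative and Q_r(z) is the parabolic cylinder. Then the one-dimensional parabolic Hausdorff measure of Σ is zero: 𝒫¹(Σ) = 0. -/

import Mathlib

open MeasureTheory Metric Set

noncomputable abbrev E3 := EuclideanSpace ℝ (Fin 3)

/-- The parabolic cylinder `Q_r(z) = B_r(x) × (t − r², t)`. -/
def pcyl (z : E3 × ℝ) (r : ℝ) : Set (E3 × ℝ) :=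
  ball z.1 r ×ˢ Set.Ioo (z.2 - r ^ 2) z.2

/-!
Vitali's covering lemma extracts, from the cylinders `Q_r(z)`, `z ∈ Σ`, with `r < R` and
`r < ε⁻² ∫_{Q_r(z)} F`, a countable disjoint subfamily whose enlargements (by a factor 6, the
centre moved up in time) cover `Σ`. Its total radius is at most `ε⁻² ∫_U F` over the union `U`,
while `|U| ≤ C R⁴ Σ r ≤ C R⁴ ε⁻² ‖F‖₁`. So `|U| → 0` as `R → 0`, and absolute continuity of the
integral makes `∫_U F`, hence the total radius, arbitrarily small.
-/

open Function
open scoped ENNReal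

section AbsoluteContinuity

variable {X : Type*} [MeasurableSpace X] {μ : Measure X} {G : X → ℝ≥0∞}

theorem exists_tsum_le_of_le_mul_setLIntegral (hG : ∫⁻ x, G x ∂μ ≠ ∞) {κ θ : ℝ≥0∞}
    (hκ : κ ≠ ∞) (hθ : θ ≠ 0) :
    ∃ δ : ℝ≥0∞, δ ≠ 0 ∧ ∀ {ι : Type*} [Countable ι] (Q : ι → Set X) (ρ : ι → ℝ≥0∞),
      (∀ i, MeasurableSet (Q i)) → Pairwise (Disjoint on Q) →
      (∀ i, ρ i ≤ κ * ∫⁻ x in Q i, G x ∂μ) → (∀ i, μ (Q i) ≤ δ * ρ i) → ∑' i, ρ i ≤ θ := by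
  obtain ⟨β, hβ, hsmall⟩ :=
    exists_pos_setLIntegral_lt_of_measure_lt hG (ENNReal.div_ne_zero.2 ⟨hθ, hκ⟩)
  obtain ⟨δ, hδ, hδβ⟩ := ENNReal.exists_pos_mul_lt (ENNReal.mul_ne_top hκ hG) hβ.ne'
  refine ⟨δ, hδ.ne', fun Q ρ hQ hdisj hρ hμ => ?_⟩
  have hsum : ∑' i, ρ i ≤ κ * ∫⁻ x in ⋃ i, Q i, G x ∂μ :=
    calc ∑' i, ρ i ≤ ∑' i, κ * ∫⁻ x in Q i, G x ∂μ := ENNReal.tsum_le_tsum hρ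
      _ = κ * ∫⁻ x in ⋃ i, Q i, G x ∂μ := by
        rw [ENNReal.tsum_mul_left, lintegral_iUnion hQ hdisj]
  have hvol : μ (⋃ i, Q i) < β :=
    calc μ (⋃ i, Q i) ≤ ∑' i, δ * ρ i := (measure_iUnion_le Q).trans (ENNReal.tsum_le_tsum hμ)
      _ ≤ δ * (κ * ∫⁻ x, G x ∂μ) := by
        rw [ENNReal.tsum_mul_left]
        gcongr
        exact hsum.trans (by gcongr; exact Measure.restrict_le_self)
      _ < β := hδβ
  calc ∑' i, ρ i ≤ κ * (θ / κ) := hsum.trans (by gcongr; exact (hsmall _ hvol).le)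
    _ ≤ θ := ENNReal.mul_div_le

end AbsoluteContinuity

theorem ofReal_le_ofReal_mul_setLIntegral {X : Type*} [MeasurableSpace X] {μ : Measure X}
    {F : X → ℝ} {s : Set X} (hF_nonneg : ∀ x, 0 ≤ F x) (hF : IntegrableOn F s μ) {a c : ℝ}
    (hc : 0 ≤ c) (h : a ≤ c * ∫ x in s, F x ∂μ) :
    ENNReal.ofReal a ≤ ENNReal.ofReal c * ∫⁻ x in s, ENNReal.ofReal (F x) ∂μ := by
  rw [← ofReal_integral_eq_lintegral_ofReal hF (.of_forall hF_nonneg), ← ENNReal.ofReal_mul hc]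
  exact ENNReal.ofReal_le_ofReal h

theorem exists_seq_cover_of_countable {α ι : Type*} [Nonempty α] [Countable ι] (c : ι → α)
    (ρ : ι → ℝ) (hρ : ∀ i, 0 ≤ ρ i) {η : ℝ} (hη : 0 < η)
    (hsum : ∑' i, ENNReal.ofReal (ρ i) ≤ ENNReal.ofReal (η / 2)) :
    ∃ (c' : ℕ → α) (r' : ℕ → ℝ), (∀ n, 0 < r' n) ∧ (∀ i, ∃ n, c' n = c i ∧ ρ i ≤ r' n) ∧
      ∑' n, ENNReal.ofReal (r' n) ≤ ENNReal.ofReal η := by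
  obtain ⟨g, hg⟩ := exists_injective_nat ι
  have hext : ∀ n, 0 ≤ extend g ρ 0 n := fun n => by
    classical
    rw [extend_def]; split_ifs; exacts [hρ _, le_rfl]
  -- Padding every radius by `η / 2 / 2 / 2 ^ n` makes all radii positive at total cost `η / 2`.
  refine ⟨extend g c fun _ => Classical.arbitrary α, fun n => extend g ρ 0 n + η / 2 / 2 / 2 ^ n,
    fun n => add_pos_of_nonneg_of_pos (hext n) (by positivity),
    fun i => ⟨g i, hg.extend_apply _ _ _, by
      dsimp only; rw [hg.extend_apply ρ]; exact le_add_of_nonneg_right (by positivity)⟩, ?_⟩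
  have hpad : ∑' n : ℕ, ENNReal.ofReal (η / 2 / 2 / 2 ^ n) = ENNReal.ofReal (η / 2) := by
    rw [← ENNReal.ofReal_tsum_of_nonneg (fun n => by positivity) (summable_geometric_two' _),
      tsum_geometric_two']
  have hextend_sum : ∑' n, ENNReal.ofReal (extend g ρ 0 n) = ∑' i, ENNReal.ofReal (ρ i) := by
    have hzero : ENNReal.ofReal ∘ (0 : ℕ → ℝ) = 0 := funext fun _ => ENNReal.ofReal_zero
    simp_rw [apply_extend ENNReal.ofReal, hzero]
    exact tsum_extend_zero hg _
  calc ∑' n, ENNReal.ofReal (extend g ρ 0 n + η / 2 / 2 / 2 ^ n)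
      = ∑' n, ENNReal.ofReal (extend g ρ 0 n) + ∑' n : ℕ, ENNReal.ofReal (η / 2 / 2 / 2 ^ n) := by
        simp_rw [ENNReal.ofReal_add (hext _) (by positivity : (0 : ℝ) ≤ η / 2 / 2 / 2 ^ _)]
        exact ENNReal.tsum_add
    _ ≤ ENNReal.ofReal (η / 2) + ENNReal.ofReal (η / 2) := by rw [hextend_sum, hpad]; gcongr
    _ = ENNReal.ofReal η := by rw [← ENNReal.ofReal_add (by positivity) (by positivity)]; ring_nf

theorem measurableSet_pcyl (z : E3 × ℝ) (r : ℝ) : MeasurableSet (pcyl z r) :=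
  measurableSet_ball.prod measurableSet_Ioo

theorem isOpen_pcyl (z : E3 × ℝ) (r : ℝ) : IsOpen (pcyl z r) :=
  isOpen_ball.prod isOpen_Ioo

theorem pcyl_nonempty (z : E3 × ℝ) {r : ℝ} (hr : 0 < r) : (pcyl z r).Nonempty :=
  ⟨(z.1, z.2 - r ^ 2 / 2), mem_ball_self hr, by constructor <;> nlinarith⟩

theorem pcyl_mono (z : E3 × ℝ) {r r' : ℝ} (hr : 0 ≤ r) (h : r ≤ r') : pcyl z r ⊆ pcyl z r' :=
  prod_mono (ball_subset_ball h) (Ioo_subset_Ioo_left (by nlinarith))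

theorem volume_pcyl (z : E3 × ℝ) {r : ℝ} (hr : 0 ≤ r) :
    volume (pcyl z r) = ENNReal.ofReal (r ^ 5) * volume (ball (0 : E3) 1) := by
  rw [pcyl, Measure.volume_eq_prod, Measure.prod_prod, Real.volume_Ioo,
    Measure.addHaar_ball _ _ hr, finrank_euclideanSpace_fin, mul_right_comm,
    ← ENNReal.ofReal_mul (by positivity)]
  ring_nf

theorem exists_volume_pcyl_le {δ : ℝ≥0∞} (hδ : δ ≠ 0) :
    ∃ R > 0, ∀ z r, 0 ≤ r → r ≤ R → volume (pcyl z r) ≤ δ * ENNReal.ofReal r := by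
  have hlim : Filter.Tendsto (fun R : ℝ => ENNReal.ofReal (R ^ 4) * volume (ball (0 : E3) 1))
      (nhdsWithin 0 (Ioi 0)) (nhds 0) := by
    have hpow : Filter.Tendsto (fun R : ℝ => R ^ 4) (nhdsWithin 0 (Ioi 0)) (nhds 0) :=
      ((continuous_pow 4).tendsto' 0 0 (by simp)).mono_left nhdsWithin_le_nhds
    simpa using ENNReal.Tendsto.mul_const (ENNReal.tendsto_ofReal hpow)
      (Or.inr (measure_ball_lt_top (μ := volume) (x := (0 : E3)) (r := 1)).ne)
  obtain ⟨R, hRδ, hR⟩ :=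
    ((hlim.eventually_lt_const (pos_iff_ne_zero.2 hδ)).and self_mem_nhdsWithin).exists
  refine ⟨R, hR, fun z r hr hrR => ?_⟩
  calc volume (pcyl z r)
      = ENNReal.ofReal (r ^ 4) * volume (ball (0 : E3) 1) * ENNReal.ofReal r := by
        rw [volume_pcyl z hr, mul_right_comm, ← ENNReal.ofReal_mul (by positivity)]
        ring_nf
    _ ≤ δ * ENNReal.ofReal r := by
        gcongr
        exact le_trans (by gcongr) hRδ.le

theorem mem_pcyl_of_inter_nonempty {z z' : E3 × ℝ} {r r' : ℝ}
    (hint : (pcyl z r ∩ pcyl z' r').Nonempty) (hle : r ≤ 2 * r') :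
    z ∈ pcyl (z'.1, z'.2 + 4 * r' ^ 2) (6 * r') := by
  obtain ⟨p, ⟨hp₁, hp₂, hp₃⟩, hq₁, hq₂, hq₃⟩ := hint
  rw [mem_ball] at hp₁ hq₁
  have hr : 0 < r := dist_nonneg.trans_lt hp₁
  have hr' : 0 < r' := dist_nonneg.trans_lt hq₁
  refine ⟨?_, ?_, ?_⟩
  · show dist z.1 z'.1 < 6 * r'
    linarith [dist_triangle_left z.1 z'.1 p.1]
  all_goals dsimp only; nlinarith

theorem exists_disjoint_pcyl_covering (T : Set ((E3 × ℝ) × ℝ)) (R : ℝ)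
    (hT : ∀ a ∈ T, 0 < a.2 ∧ a.2 ≤ R) :
    ∃ u ⊆ T, u.Countable ∧ u.PairwiseDisjoint (fun a => pcyl a.1 a.2) ∧
      ∀ a ∈ T, ∃ b ∈ u, a.1 ∈ pcyl (b.1.1, b.1.2 + 4 * b.2 ^ 2) (6 * b.2) := by
  obtain ⟨u, huT, hdisj, hcov⟩ :=
    Vitali.exists_disjoint_subfamily_covering_enlargement (fun a => pcyl a.1 a.2) T (·.2) 2
      one_lt_two (fun a ha => (hT a ha).1.le) R (fun a ha => (hT a ha).2)
      (fun a ha => pcyl_nonempty _ (hT a ha).1)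
  refine ⟨u, huT, hdisj.countable_of_isOpen (fun a _ => isOpen_pcyl _ _)
    (fun a ha => pcyl_nonempty _ (hT a (huT ha)).1), hdisj, fun a ha => ?_⟩
  obtain ⟨b, hb, hint, hle⟩ := hcov a ha
  exact ⟨b, hb, mem_pcyl_of_inter_nonempty hint hle⟩

theorem parabolic_hausdorff_singular_set_general
    (S : Set (E3 × ℝ)) (F : E3 × ℝ → ℝ) (ε : ℝ)
    (hF_nonneg : ∀ p, 0 ≤ F p) (hF_int : Integrable F (volume : Measure (E3 × ℝ)))
    (hcover : ∀ z ∈ S, ∀ δ > (0 : ℝ), ∃ r : ℝ, 0 < r ∧ r < δ ∧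
      r < ε⁻¹ ^ 2 * ∫ p in pcyl z r, F p) :
    ∀ η > (0 : ℝ), ∃ (c : ℕ → E3 × ℝ) (r : ℕ → ℝ),
      (∀ i, 0 < r i) ∧ S ⊆ ⋃ i, pcyl (c i) (r i) ∧
      (∑' i, ENNReal.ofReal (r i)) ≤ ENNReal.ofReal η := by
  intro η hη
  obtain ⟨δ, hδ, hsmall⟩ := exists_tsum_le_of_le_mul_setLIntegral hF_int.lintegral_lt_top.ne
    (κ := ENNReal.ofReal (6 * ε⁻¹ ^ 2)) ENNReal.ofReal_ne_top
    (θ := ENNReal.ofReal (η / 2)) (ENNReal.ofReal_pos.2 (half_pos hη)).ne'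
  obtain ⟨R, hR, hvol⟩ := exists_volume_pcyl_le hδ
  obtain ⟨u, huT, hu, hdisj, hcov⟩ := exists_disjoint_pcyl_covering
    {a | a.1 ∈ S ∧ 0 < a.2 ∧ a.2 < R ∧ a.2 < ε⁻¹ ^ 2 * ∫ p in pcyl a.1 a.2, F p} R
    fun a ha => ⟨ha.2.1, ha.2.2.1.le⟩
  have := hu.to_subtype
  have hsum : ∑' b : u, ENNReal.ofReal (6 * b.1.2) ≤ ENNReal.ofReal (η / 2) := by
    refine hsmall (fun b : u => pcyl b.1.1 b.1.2) _ (fun b => measurableSet_pcyl _ _)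
      (fun b b' hbb' => hdisj b.2 b'.2 (Subtype.coe_injective.ne hbb')) (fun b => ?_) (fun b => ?_)
    · obtain ⟨-, -, -, hb⟩ := huT b.2
      exact ofReal_le_ofReal_mul_setLIntegral hF_nonneg hF_int.integrableOn (by positivity)
        (by linarith)
    · obtain ⟨-, hb₀, hbR, -⟩ := huT b.2
      exact (hvol _ _ hb₀.le hbR.le).trans (by gcongr; linarith)
  obtain ⟨c, r, hr, hcr, hsum'⟩ := exists_seq_cover_of_countable
    (fun b : u => (b.1.1.1, b.1.1.2 + 4 * b.1.2 ^ 2)) (fun b => 6 * b.1.2)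
    (fun b => by linarith [(huT b.2).2.1]) hη hsum
  refine ⟨c, r, hr, fun z hz => ?_, hsum'⟩
  obtain ⟨r₀, hr₀, hr₀R, hr₀F⟩ := hcover z hz R hR
  obtain ⟨b, hb, hzb⟩ := hcov (z, r₀) ⟨hz, hr₀, hr₀R, hr₀F⟩
  obtain ⟨n, hcn, hrn⟩ := hcr ⟨b, hb⟩
  exact mem_iUnion.2 ⟨n, hcn ▸ pcyl_mono _ (by linarith [(huT hb).2.1]) hrn hzb⟩

/-- If at every point of `Σ` there are arbitrarily small radii `r` with
`r < ε⁻² ∫_{Q_r(z)} F`, for a fixed nonnegative `F ∈ L¹`, then the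
one-dimensional parabolic Hausdorff measure of `Σ` vanishes, expressed here
through the existence of coverings by parabolic cylinders of arbitrarily small
total radius. -/
theorem parabolic_hausdorff_singular_set
    (S : Set (E3 × ℝ)) (F : E3 × ℝ → ℝ) (ε : ℝ) (hε : 0 < ε)
    (hF_nonneg : ∀ p, 0 ≤ F p) (hF_int : Integrable F (volume : Measure (E3 × ℝ)))
    (hcover : ∀ z ∈ S, ∀ δ > (0 : ℝ), ∃ r : ℝ, 0 < r ∧ r < δ ∧
      r < ε⁻¹ ^ 2 * ∫ p in pcyl z r, F p) :
    ∀ η > (0 : ℝ), ∃ (c : ℕ → E3 × ℝ) (r : ℕ → ℝ),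
      (∀ i, 0 < r i) ∧ S ⊆ ⋃ i, pcyl (c i) (r i) ∧
      (∑' i, ENNReal.ofReal (r i)) ≤ ENNReal.ofReal η :=
  parabolic_hausdorff_singular_set_general S F ε hF_nonneg hF_int hcover
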